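/- For every q ⊆ ℕ, let j^q : Ω → Ω be the operation j^q(p) := q ⊸ p. Then j^q is a Lawvere–Tierney topology, j^q = j_{Med_q} (equivalently, U_{j^q} = Med_q), and for all P,Q ⊆ ℕ: P ≤_M Q if and only if j^P ≤_r j^Q. Hence Q ↦ j^Q induces an isomorphism between the Medvedev degrees and the r-degrees of the open topologies j^q. -/

import Mathlib

namespace KleeneOracle

/-- `e ∗ x`: application of the `e`-th partial computable function on ℕ. -/
def ap (e x : ℕ) : Part ℕ :=
  Nat.Partrec.Code.eval (Denumerable.ofNat Nat.Partrec.Code e) x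

/-- `e ∗ A := {e ∗ a : a ∈ A}`. -/
def apSet (e : ℕ) (A : Set ℕ) : Set ℕ := {z | ∃ a ∈ A, z ∈ ap e a}

/-- A partial multifunction on ℕ. -/
abbrev Multifun := ℕ → Part (Set ℕ)

def Transparent (U : Multifun) : Prop :=
  ∃ u : ℕ, ∀ (e x : ℕ) (A : Set ℕ), A ∈ U x → (∀ y ∈ A, (ap e y).Dom) →
    ∃ c ∈ ap u e, ∃ d ∈ ap c x, ∃ B ∈ U d, B ⊆ apSet e A

def Inflationary (U : Multifun) : Prop :=
  ∃ η : ℕ, ∀ x : ℕ, ∃ c ∈ ap η x, ∃ B ∈ U c, B ⊆ {x}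

def mcomp (g f : Multifun) : Multifun := fun x =>
  ⟨∃ A ∈ f x, ∀ y ∈ A, (g y).Dom,
   fun _ => {z | ∃ A ∈ f x, ∃ y ∈ A, ∃ B ∈ g y, z ∈ B}⟩

def Idempotent (U : Multifun) : Prop :=
  ∃ μ : ℕ, ∀ (x : ℕ) (A : Set ℕ), A ∈ mcomp U U x →
    ∃ c ∈ ap μ x, ∃ B ∈ U c, B ⊆ A

def mRed (f g : Multifun) : Prop :=
  ∃ e : ℕ, ∀ (x : ℕ) (A : Set ℕ), A ∈ f x →
    ∃ c ∈ ap e x, ∃ B ∈ g c, B ⊆ A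

def wRed (f g : Multifun) : Prop :=
  ∃ em ep : ℕ, ∀ (x : ℕ) (A : Set ℕ), A ∈ f x →
    ∃ c ∈ ap em x, ∃ B ∈ g c, ∀ y ∈ B, ∃ z ∈ ap ep (Nat.pair x y), z ∈ A

def Weih (g : Multifun) : Multifun := fun w =>
  ⟨∃ c ∈ ap w.unpair.1 w.unpair.2.unpair.2, ∃ B ∈ g c,
     ∀ y ∈ B, (ap w.unpair.2.unpair.1 (Nat.pair w.unpair.2.unpair.2 y)).Dom,
   fun _ => {z | ∃ c ∈ ap w.unpair.1 w.unpair.2.unpair.2, ∃ B ∈ g c,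
     ∃ y ∈ B, z ∈ ap w.unpair.2.unpair.1 (Nat.pair w.unpair.2.unpair.2 y)}⟩

def idsq (g : Multifun) : Multifun := fun w =>
  if w.unpair.1 = 0 then Part.some {w.unpair.2}
  else if w.unpair.1 = 1 then g w.unpair.2
  else Part.none

def pWeih (g : Multifun) : Multifun := Weih (idsq g)

def pwRed (f g : Multifun) : Prop := wRed f (idsq g)

def Med (Q : Set ℕ) : Multifun := fun e =>
  ⟨∀ a ∈ Q, (ap e a).Dom, fun _ => apSet e Q⟩

def MedRed (P Q : Set ℕ) : Prop :=
  ∃ e : ℕ, (∀ a ∈ Q, (ap e a).Dom) ∧ apSet e Q ⊆ P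

def constMF (P : Set ℕ) : Multifun := fun _ => Part.some P

def imp (p q : Set ℕ) : Set ℕ := {e | ∀ x ∈ p, ∃ z ∈ ap e x, z ∈ q}

def OpMonotone (j : Set ℕ → Set ℕ) : Prop :=
  ∃ u : ℕ, ∀ p q : Set ℕ, ∀ a ∈ imp p q, ∃ c ∈ ap u a, c ∈ imp (j p) (j q)

def OpInflationary (j : Set ℕ → Set ℕ) : Prop :=
  ∃ e : ℕ, ∀ p : Set ℕ, e ∈ imp p (j p)

def OpIdempotent (j : Set ℕ → Set ℕ) : Prop :=
  ∃ e : ℕ, ∀ p : Set ℕ, e ∈ imp (j (j p)) (j p)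

def LawvereTierney (j : Set ℕ → Set ℕ) : Prop :=
  OpMonotone j ∧ OpInflationary j ∧ OpIdempotent j

def jU (U : Multifun) (p : Set ℕ) : Set ℕ := {x | ∃ A ∈ U x, A ⊆ p}

def SingleValued (U : Multifun) : Prop := ∀ x : ℕ, ∀ A ∈ U x, ∃ y : ℕ, A = {y}

def presInter (j : Set ℕ → Set ℕ) : Prop :=
  ∀ (ι : Type) [Nonempty ι] (p : ι → Set ℕ), j (⋂ i, p i) = ⋂ i, j (p i)

def presUnion (j : Set ℕ → Set ℕ) : Prop :=
  ∀ (ι : Type) (p : ι → Set ℕ), j (⋃ i, p i) = ⋃ i, j (p i)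

def Uop (j : Set ℕ → Set ℕ) : Multifun := fun x =>
  ⟨∃ p : Set ℕ, x ∈ j p, fun _ => ⋂₀ {p : Set ℕ | x ∈ j p}⟩

def mMorphism (e : ℕ) (f g : Multifun) : Prop :=
  ∀ (x : ℕ) (A : Set ℕ), A ∈ f x → ∃ c ∈ ap e x, ∃ B ∈ g c, B ⊆ A

def rMorphism (e : ℕ) (j k : Set ℕ → Set ℕ) : Prop :=
  ∀ p : Set ℕ, e ∈ imp (j p) (k p)

def rRed (j k : Set ℕ → Set ℕ) : Prop := ∃ e : ℕ, rMorphism e j k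


/-- The open topology `j^q : p ↦ (q ⊸ p)`. -/
def jq (q : Set ℕ) : Set ℕ → Set ℕ := fun p => imp q p


/-!
An index `e` lies in `q ⊸ p` exactly when `φ_e` is total on `q` with `e ∗ q ⊆ p`; this gives
`j^q = j_{Med_q}` at once, and `U_{j^q} = Med_q` because `U_{j_U} = U` for every `U`. The topology
laws and the passage from `P ≤_M Q` to `j^P ≤_r j^Q` are realised by the composition, constant
and diagonal combinators, all obtained from s-m-n. Conversely, an r-morphism evaluated at `p = P`
on an index of the identity yields an index in `Q ⊸ P`, i.e. a Medvedev reduction.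
-/

open Nat.Partrec (Code)
open Nat.Partrec.Code

lemma ap_partrec₂ : Partrec₂ ap :=
  eval_part.comp ((Computable.ofNat Code).comp Computable.fst) Computable.snd

lemma exists_ap_eq {g : ℕ →. ℕ} (hg : Partrec g) : ∃ e, ∀ x, ap e x = g x := by
  obtain ⟨c, hc⟩ := exists_code.1 (Partrec.nat_iff.1 hg)
  exact ⟨Encodable.encode c, fun x => by simp [ap, hc]⟩

lemma exists_ap_curry {f : ℕ → ℕ →. ℕ} (hf : Partrec₂ f) :
    ∃ u, ∀ a, ∃ c ∈ ap u a, ∀ x, ap c x = f a x := by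
  obtain ⟨cf, hcf⟩ := exists_code.1 <| Partrec.nat_iff.1 <|
    hf.comp (Computable.fst.comp Computable.unpair) (Computable.snd.comp Computable.unpair)
  obtain ⟨u, hu⟩ := exists_ap_eq (g := fun a => Part.some (Encodable.encode (curry cf a)))
    (Primrec.encode.comp (primrec₂_curry.comp (Primrec.const cf) Primrec.id)).to_comp.partrec
  exact ⟨u, fun a => ⟨_, by rw [hu]; exact Part.mem_some _, fun x => by simp [ap, hcf]⟩⟩

lemma exists_ap_id : ∃ i, ∀ x, ap i x = Part.some x :=
  exists_ap_eq Computable.id.partrec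

lemma exists_ap_const : ∃ k, ∀ x, ∃ c ∈ ap k x, ∀ y, ap c y = Part.some x :=
  exists_ap_curry (show Computable₂ fun x _ : ℕ => x from Computable.fst).partrec₂

lemma exists_ap_diag :
    ∃ w, ∀ e, ∃ d ∈ ap w e, ∀ y, ap d y = (ap e y).bind fun z => ap z y :=
  exists_ap_curry (ap_partrec₂.bind (ap_partrec₂.comp Computable.snd
    (Computable.snd.comp Computable.fst)))

lemma exists_ap_precomp (e : ℕ) :
    ∃ u, ∀ a, ∃ d ∈ ap u a, ∀ y, ap d y = (ap e y).bind (ap a) :=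
  exists_ap_curry ((ap_partrec₂.comp (Computable.const e) Computable.snd).bind
    (ap_partrec₂.comp (Computable.fst.comp Computable.fst) Computable.snd))

lemma exists_ap_comp :
    ∃ u, ∀ a, ∃ c ∈ ap u a, ∀ e, ∃ d ∈ ap c e, ∀ y, ap d y = (ap e y).bind (ap a) := by
  -- `v` maps `⟨a, e⟩` to an index of `φ_a ∘ φ_e`; currying `v` once more separates `a` from `e`.
  obtain ⟨v, hv⟩ := exists_ap_curry (f := fun n y => (ap n.unpair.2 y).bind (ap n.unpair.1))
    ((ap_partrec₂.comp (Computable.snd.comp (Computable.unpair.comp Computable.fst))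
      Computable.snd).bind
      (ap_partrec₂.comp (Computable.fst.comp (Computable.unpair.comp
        (Computable.fst.comp Computable.fst))) Computable.snd))
  obtain ⟨u, hu⟩ := exists_ap_curry (f := fun a e => ap v (Nat.pair a e))
    (ap_partrec₂.comp (Computable.const v) Primrec₂.natPair.to_comp)
  refine ⟨u, fun a => ?_⟩
  obtain ⟨c, hc, hca⟩ := hu a
  refine ⟨c, hc, fun e => ?_⟩
  obtain ⟨d, hd, hdae⟩ := hv (Nat.pair a e)
  exact ⟨d, hca e ▸ hd, fun y => by simp [hdae]⟩

lemma mem_imp_iff {e : ℕ} {q p : Set ℕ} :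
    e ∈ imp q p ↔ (∀ a ∈ q, (ap e a).Dom) ∧ apSet e q ⊆ p := by
  constructor
  · intro h
    refine ⟨fun a ha => ?_, ?_⟩
    · obtain ⟨z, hz, -⟩ := h a ha
      exact Part.dom_iff_mem.2 ⟨z, hz⟩
    · rintro z ⟨a, ha, hza⟩
      obtain ⟨w, hw, hwp⟩ := h a ha
      rwa [Part.mem_unique hza hw]
  · rintro ⟨hdom, hsub⟩ a ha
    exact ⟨_, Part.get_mem (hdom a ha), hsub ⟨a, ha, Part.get_mem _⟩⟩

lemma medRed_iff_exists_mem_imp {P Q : Set ℕ} : MedRed P Q ↔ ∃ e, e ∈ imp Q P := by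
  simp only [MedRed, mem_imp_iff]

lemma mem_imp_of_ap_eq_bind {q p r : Set ℕ} {e a d : ℕ} (he : e ∈ imp q p) (ha : a ∈ imp p r)
    (hd : ∀ y, ap d y = (ap e y).bind (ap a)) : d ∈ imp q r := by
  intro y hy
  obtain ⟨z, hz, hzp⟩ := he y hy
  obtain ⟨w, hw, hwr⟩ := ha z hzp
  exact ⟨w, hd y ▸ Part.mem_bind hz hw, hwr⟩

lemma opMonotone_jq (q : Set ℕ) : OpMonotone (jq q) := by
  obtain ⟨u, hu⟩ := exists_ap_comp
  refine ⟨u, fun p r a ha => ?_⟩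
  obtain ⟨c, hc, hce⟩ := hu a
  refine ⟨c, hc, fun e he => ?_⟩
  obtain ⟨d, hd, hde⟩ := hce e
  exact ⟨d, hd, mem_imp_of_ap_eq_bind he ha hde⟩

lemma opInflationary_jq (q : Set ℕ) : OpInflationary (jq q) := by
  obtain ⟨k, hk⟩ := exists_ap_const
  refine ⟨k, fun p x hx => ?_⟩
  obtain ⟨c, hc, hcx⟩ := hk x
  exact ⟨c, hc, fun y _ => ⟨x, hcx y ▸ Part.mem_some x, hx⟩⟩

lemma opIdempotent_jq (q : Set ℕ) : OpIdempotent (jq q) := by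
  obtain ⟨w, hw⟩ := exists_ap_diag
  refine ⟨w, fun p e he => ?_⟩
  obtain ⟨d, hd, hde⟩ := hw e
  refine ⟨d, hd, fun y hy => ?_⟩
  obtain ⟨z, hz, hzq⟩ := he y hy
  obtain ⟨v, hv, hvp⟩ := hzq y hy
  exact ⟨v, hde y ▸ Part.mem_bind hz hv, hvp⟩

lemma lawvereTierney_jq (q : Set ℕ) : LawvereTierney (jq q) :=
  ⟨opMonotone_jq q, opInflationary_jq q, opIdempotent_jq q⟩

lemma jq_eq_jU_med (q : Set ℕ) : jq q = jU (Med q) := by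
  funext p
  ext e
  simp only [jq, jU, Med, mem_imp_iff, Part.mem_mk_iff, Set.mem_ofPred_eq]
  constructor
  · rintro ⟨hdom, hsub⟩
    exact ⟨_, ⟨hdom, rfl⟩, hsub⟩
  · rintro ⟨_, ⟨hdom, rfl⟩, hsub⟩
    exact ⟨hdom, hsub⟩

lemma uop_jU (U : Multifun) : Uop (jU U) = U := by
  funext x
  refine Part.ext' ⟨fun ⟨_, A, hA, _⟩ => Part.dom_iff_mem.2 ⟨A, hA⟩,
    fun h => ⟨_, _, Part.get_mem h, subset_rfl⟩⟩ fun _ h => ?_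
  refine subset_antisymm (Set.sInter_subset_of_mem ⟨_, Part.get_mem h, subset_rfl⟩)
    (Set.subset_sInter ?_)
  rintro p ⟨A, hA, hAp⟩
  rwa [Part.get_eq_of_mem hA]

lemma medRed_iff_rRed_jq (P Q : Set ℕ) : MedRed P Q ↔ rRed (jq P) (jq Q) := by
  rw [medRed_iff_exists_mem_imp]
  constructor
  · rintro ⟨e, he⟩
    obtain ⟨u, hu⟩ := exists_ap_precomp e
    refine ⟨u, fun p a ha => ?_⟩
    obtain ⟨d, hd, hda⟩ := hu a
    exact ⟨d, hd, mem_imp_of_ap_eq_bind he ha hda⟩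
  · rintro ⟨r, hr⟩
    obtain ⟨i, hi⟩ := exists_ap_id
    obtain ⟨e, -, he⟩ := hr P i fun x hx => ⟨x, hi x ▸ Part.mem_some x, hx⟩
    exact ⟨e, he⟩

/-- each `j^q` is a Lawvere–Tierney topology, `j^q = j_{Med_q}`
(equivalently `U_{j^q} = Med_q`), and `P ≤_M Q ↔ j^P ≤_r j^Q`.  Hence `Q ↦ j^Q`
induces an isomorphism between the Medvedev degrees and the r-degrees of the open
topologies. -/
theorem medvedev_open_topologies :
    (∀ q : Set ℕ, LawvereTierney (jq q) ∧ jq q = jU (Med q) ∧ Uop (jq q) = Med q) ∧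
    (∀ P Q : Set ℕ, MedRed P Q ↔ rRed (jq P) (jq Q)) :=
  ⟨fun q => ⟨lawvereTierney_jq q, jq_eq_jU_med q, by rw [jq_eq_jU_med, uop_jU]⟩,
    medRed_iff_rRed_jq⟩

end KleeneOracle
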